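/- arXiv:math/0110159 — 4 statements merged into one kernel-verified Lean document; each statement's English description precedes it below -/
import Mathlib

section
/- Under the hypotheses of the planar ILDM expansion, the second-order ILDM coefficient ψ⁽²⁾ and the second-order slow-manifold coefficient h⁽²⁾ satisfy ψ⁽²⁾ − h⁽²⁾ = −(f²/g_z²) h₀″, evaluated at (y, h₀(y), 0). In particular ψ⁽²⁾ = h⁽²⁾ for all y if and only if f² h₀″ = 0 for all y. -/
/-!
Substituting `ψ⁽¹⁾ = h⁽¹⁾` makes the right-hand sides of the two defining equations agree except
for the extra term `-(f² / g_z) h₀″` in the ILDM equation; dividing by `g_z ≠ 0` gives the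
difference, which vanishes exactly when `f² h₀″` does.
-/

section Field

variable {𝕜 : Type*} [Field 𝕜]

theorem sub_eq_of_mul_eq_of_mul_eq_sub {a x y r b c : 𝕜} (ha : a ≠ 0)
    (hy : a * y = r) (hx : a * x = r - b / a * c) :
    x - y = -(b / a ^ 2) * c := by
  have hdiff : a * (x - y) = -(b / a) * c := by rw [mul_sub, hx, hy]; ring
  field_simp at hdiff ⊢
  linear_combination hdiff

theorem neg_div_sq_mul_eq_zero_iff {a : 𝕜} (ha : a ≠ 0) (b c : 𝕜) :
    -(b / a ^ 2) * c = 0 ↔ b * c = 0 := by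
  rw [neg_mul, neg_eq_zero, div_mul_eq_mul_div, div_eq_zero_iff]
  simp [ha]

end Field

theorem stmt3 (K : Set ℝ)
    (fval fz fe gz gzz gze gee h0'' h0' h1 h1' h2 ψ1 ψ1' ψ2 : ℝ → ℝ)
    (hgz : ∀ y ∈ K, gz y < 0)
    (hψ1 : ∀ y ∈ K, ψ1 y = h1 y) (hψ1' : ∀ y ∈ K, ψ1' y = h1' y)
    (hh2 : ∀ y ∈ K, gz y * h2 y =
      h1' y * fval y + h0' y * (fz y * h1 y + fe y)
      - (1/2) * gzz y * (h1 y)^2 - gze y * h1 y - (1/2) * gee y)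
    (hψ2 : ∀ y ∈ K, gz y * ψ2 y =
      fval y * ψ1' y - (fval y)^2 / gz y * h0'' y
      + (fz y * ψ1 y + fe y) * h0' y
      - (1/2) * gzz y * (ψ1 y)^2 - gze y * ψ1 y - (1/2) * gee y) :
    (∀ y ∈ K, ψ2 y - h2 y = -((fval y)^2 / (gz y)^2) * h0'' y) ∧
    ((∀ y ∈ K, ψ2 y = h2 y) ↔ (∀ y ∈ K, (fval y)^2 * h0'' y = 0)) := by
  have hdiff : ∀ y ∈ K, ψ2 y - h2 y = -((fval y)^2 / (gz y)^2) * h0'' y := fun y hy =>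
    sub_eq_of_mul_eq_of_mul_eq_sub (hgz y hy).ne (hh2 y hy)
      ((hψ2 y hy).trans (by rw [hψ1 y hy, hψ1' y hy]; ring))
  refine ⟨hdiff, forall₂_congr fun y hy => ?_⟩
  rw [← sub_eq_zero, hdiff y hy, neg_div_sq_mul_eq_zero_iff (hgz y hy).ne]
end

section
/- For the Michaelis–Menten–Henri system, the second-order slow-manifold coefficient determined by the recursion g_z h⁽²⁾ = (h⁽¹⁾)′ f + h₀′(f_z h⁽¹⁾ + f_ε) − ½ g_zz (h⁽¹⁾)² − g_zε h⁽¹⁾ − ½ g_εε equals h⁽²⁾(y) = a b y (2ab − 3by − ay − a²)/(y+a)⁷ for y > 0. -/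
theorem hasDerivAt_mul_div_add_pow (c a y : ℝ) (n : ℕ) (hy : y + a ≠ 0) :
    HasDerivAt (fun u => c * u / (u + a) ^ n) (c * (y + a - n * y) / (y + a) ^ (n + 1)) y := by
  have hnum : HasDerivAt (fun u : ℝ => c * u) c y := by
    simpa using (hasDerivAt_id y).const_mul c
  have hden : HasDerivAt (fun u : ℝ => (u + a) ^ n) (n * (y + a) ^ (n - 1)) y := by
    simpa using ((hasDerivAt_id y).add_const a).fun_pow n
  refine (hnum.fun_div hden (pow_ne_zero n hy)).congr_deriv ?_
  rcases n with _ | n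
  · simp [hy]
  · simp only [Nat.cast_succ, Nat.add_sub_cancel]
    field_simp
    ring

theorem stmt5 (a b y : ℝ) (hab : a > b) (hb : b > 0) (hy : y > 0) :
    (-(y + a)) * (a * b * y * (2*a*b - 3*b*y - a*y - a^2) / (y + a)^7) =
      deriv (fun u => a * b * u / (u + a)^4) y * (-(b*y) / (y + a))
      + (a / (y + a)^2) * ((y + a - b) * (a*b*y / (y + a)^4) + 0)
      - (1/2) * 0 * (a*b*y/(y+a)^4)^2 - 0 * (a*b*y/(y+a)^4) - (1/2) * 0 := by
  have hya : y + a ≠ 0 := by linarith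
  rw [(hasDerivAt_mul_div_add_pow (a * b) a y 4 hya).deriv]
  field_simp
  ring
end

section
/- For the Michaelis–Menten–Henri system, the second-order ILDM coefficient ψ⁽²⁾(y) = aby(2ab − by − ay − a²)/(y+a)⁷ and the slow-manifold coefficient h⁽²⁾(y) = aby(2ab − 3by − ay − a²)/(y+a)⁷ satisfy ψ⁽²⁾(y) − h⁽²⁾(y) = 2ab²y²/(y+a)⁷ = −(f²/g_z²) h₀″(y), where f = −by/(y+a), g_z = −(y+a), and h₀″(y) = −2a/(y+a)³. -/
theorem stmt6_general (a b y : ℝ) :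
    a*b*y*(2*a*b - b*y - a*y - a^2)/(y+a)^7
      - a*b*y*(2*a*b - 3*b*y - a*y - a^2)/(y+a)^7
      = 2*a*b^2*y^2/(y+a)^7 ∧
    2*a*b^2*y^2/(y+a)^7
      = -(((-(b*y)/(y+a))^2) / ((-(y+a))^2)) * (-(2*a)/(y+a)^3) := by
  generalize y + a = s
  constructor <;> ring

theorem stmt6 (a b y : ℝ) (hab : a > b) (hb : b > 0) (hy : y > 0) :
    a*b*y*(2*a*b - b*y - a*y - a^2)/(y+a)^7
      - a*b*y*(2*a*b - 3*b*y - a*y - a^2)/(y+a)^7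
      = 2*a*b^2*y^2/(y+a)^7 ∧
    2*a*b^2*y^2/(y+a)^7
      = -(((-(b*y)/(y+a))^2) / ((-(y+a))^2)) * (-(2*a)/(y+a)^3) :=
  stmt6_general a b y
end

section
/- For the Michaelis–Menten–Henri model, one application of the Fraser–Roussel iteration starting from φ⁽⁰⁾(y) = y/(y+a) gives φ⁽¹⁾(y,ε) = (y + ε·(a/(y+a)²)·y)/(y + a + ε·(a/(y+a)²)·(y+a−b)), whose Taylor expansion in ε at 0 satisfies φ⁽¹⁾ = y/(y+a) + ε·aby/(y+a)⁴ − ε²·a²by(y+a−b)/(y+a)⁷ + O(ε³), for fixed y > 0. -/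
/-! Writing `m = a / (y + a)²` for the slope of `φ⁽⁰⁾`, the iterate is the Möbius function
`ε ↦ (y + ε m y) / (y + a + ε m (y + a - b))`, so its quadratic Taylor polynomial misses it by
exactly the next term of a geometric series, `ε³ K / Q` with `K = a³ b y (y + a - b)² / (y + a)⁹`
and `Q` the denominator. Since `a > b > 0` and `y > 0`, the correction `ε m (y + a - b)` in `Q` is
positive for `ε > 0`, so `Q ≥ y + a` and the remainder is at most `K / (y + a) · ε³`. -/

theorem hasDerivAt_div_add_const {a y : ℝ} (h : y + a ≠ 0) :
    HasDerivAt (fun u => u / (u + a)) (a / (y + a) ^ 2) y := by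
  refine ((hasDerivAt_id' y).div ((hasDerivAt_id' y).add_const a) h).congr_deriv ?_
  ring

theorem fraserRoussel_sub_taylor_two {𝕜 : Type*} [Field 𝕜] {a b y ε : 𝕜} (hs : y + a ≠ 0)
    (hQ : y + a + ε * (a / (y + a) ^ 2) * (y + a - b) ≠ 0) :
    (y + ε * (a / (y + a) ^ 2) * y) / (y + a + ε * (a / (y + a) ^ 2) * (y + a - b))
        - (y / (y + a) + ε * (a * b * y / (y + a) ^ 4)
          - ε ^ 2 * (a ^ 2 * b * y * (y + a - b) / (y + a) ^ 7))
      = ε ^ 3 * (a ^ 3 * b * y * (y + a - b) ^ 2 / (y + a) ^ 9)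
          / (y + a + ε * (a / (y + a) ^ 2) * (y + a - b)) := by
  have hQ' : (y + a) ^ 3 + ε * a * (y + a - b) ≠ 0 := by
    contrapose! hQ
    field_simp
    linear_combination hQ
  field_simp
  ring

theorem stmt12 (a b y : ℝ) (hab : a > b) (hb : 0 < b) (hy : 0 < y) :
    deriv (fun u => u / (u + a)) y = a / (y + a)^2 ∧
    ∃ C > (0:ℝ), ∃ ε₀ > (0:ℝ), ∀ ε ∈ Set.Ioo (0:ℝ) ε₀,
      |(y + ε * (a/(y+a)^2) * y) / (y + a + ε * (a/(y+a)^2) * (y+a-b))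
        - (y/(y+a) + ε * (a*b*y/(y+a)^4)
          - ε^2 * (a^2*b*y*(y+a-b)/(y+a)^7))| ≤ C * ε^3 := by
  have ha : 0 < a := hb.trans hab
  have hs : 0 < y + a := by linarith
  have hsb : 0 < y + a - b := by linarith
  refine ⟨(hasDerivAt_div_add_const hs.ne').deriv,
    a ^ 3 * b * y * (y + a - b) ^ 2 / (y + a) ^ 10, by positivity, 1, one_pos, ?_⟩
  rintro ε ⟨hε, -⟩
  have hQ : y + a ≤ y + a + ε * (a / (y + a) ^ 2) * (y + a - b) :=
    le_add_of_nonneg_right (by positivity)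
  rw [fraserRoussel_sub_taylor_two hs.ne' (hs.trans_le hQ).ne', abs_of_nonneg (by positivity)]
  calc _ ≤ ε ^ 3 * (a ^ 3 * b * y * (y + a - b) ^ 2 / (y + a) ^ 9) / (y + a) := by gcongr
    _ = _ := by field_simp
end
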